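/- Let Z and W be nonempty words over the alphabet {L, M, R} satisfying ZW = W̄Z̄ and |Z| ≠ |W|. Set m = |ZW|, r = |W| and d = gcd(m, r). If m/d is even, then (m−r)/d and r/d are odd, and there exists a word E of length d such that Z = (ĒE)^{((m−r)/d − 1)/2} Ē and W = (EĒ)^{(r/d − 1)/2} E; in particular, Z is the alternating word (ĒE)···Ē and W is the alternating word (EĒ)···E built from E. -/

import Mathlib

/-- The three-letter alphabet {L, M, R}. -/
inductive Letter : Type
  | L | M | R
deriving DecidableEq, Repr

/-- Complementation on letters: R̄ = L, L̄ = R, M̄ = M. -/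
def Letter.bar : Letter → Letter
  | .L => .R
  | .M => .M
  | .R => .L

/-- Complement of a word (letterwise). -/
def comp (w : List Letter) : List Letter := w.map Letter.bar

/-- k-fold concatenation of a word with itself. -/
def npow (w : List Letter) : ℕ → List Letter
  | 0 => []
  | n + 1 => w ++ npow w n


lemma bar_bar (x : Letter) : x.bar.bar = x := by cases x <;> rfl

lemma comp_comp (w : List Letter) : comp (comp w) = w := by
  simp [comp, List.map_map, Function.comp_def, bar_bar]

lemma comp_length (w : List Letter) : (comp w).length = w.length := by simp [comp]

lemma bar_iter (q : ℕ) (x : Letter) :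
    Letter.bar^[q] x = if q % 2 = 0 then x else x.bar := by
  induction q generalizing x with
  | zero => simp
  | succ n ih =>
    rw [Function.iterate_succ_apply, ih]
    rcases Nat.even_or_odd n with h | h
    · have h1 : n % 2 = 0 := Nat.even_iff.mp h
      have h2 : (n+1) % 2 = 1 := by omega
      simp [h1, h2]
    · have h1 : n % 2 = 1 := Nat.odd_iff.mp h
      have h2 : (n+1) % 2 = 0 := by omega
      simp [h1, h2, bar_bar]

lemma npow_length (w : List Letter) (k : ℕ) : (npow w k).length = k * w.length := by
  induction k with
  | zero => simp [npow]
  | succ n ih => simp [npow, ih]; ring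

lemma npow_add' (w : List Letter) (a b : ℕ) :
    npow w (a + b) = npow w a ++ npow w b := by
  induction a with
  | zero => simp [npow]
  | succ n ih =>
    have : n + 1 + b = (n + b) + 1 := by omega
    rw [this, npow, npow, ih, List.append_assoc]

lemma npow_shuffle (u v : List Letter) (k : ℕ) :
    u ++ npow (v ++ u) k = npow (u ++ v) k ++ u := by
  induction k with
  | zero => simp [npow]
  | succ n ih =>
    rw [npow, npow]
    rw [show u ++ ((v ++ u) ++ npow (v ++ u) n) = (u ++ v) ++ (u ++ npow (v ++ u) n) by
      simp [List.append_assoc], ih]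
    simp [List.append_assoc]

lemma npow_getElem (w : List Letter) (hw : w.length ≠ 0) (k j : ℕ)
    (h : j < (npow w k).length) :
    (npow w k)[j] = w[j % w.length]'(Nat.mod_lt _ (Nat.pos_of_ne_zero hw)) := by
  induction k generalizing j with
  | zero => simp [npow] at h
  | succ n ih =>
    have h2 : j < (w ++ npow w n).length := h
    show (w ++ npow w n)[j]'h2 = _
    rcases lt_or_ge j w.length with hj | hj
    · rw [List.getElem_append_left hj]
      congr 1
      exact (Nat.mod_eq_of_lt hj).symm
    · have h' : j - w.length < (npow w n).length := by
        rw [npow_length]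
        have := h
        rw [npow, List.length_append, npow_length] at this
        omega
      rw [List.getElem_append_right hj, ih _ h']
      congr 1
      conv_rhs => rw [Nat.mod_eq_sub_mod hj]

theorem stmt_2 (Z W : List Letter) (hZ : Z ≠ []) (hW : W ≠ [])
    (hne : Z.length ≠ W.length)
    (heq : Z ++ W = comp W ++ comp Z)
    (m r d : ℕ) (hm : m = (Z ++ W).length) (hr : r = W.length)
    (hd : d = Nat.gcd m r)
    (heven : Even (m / d)) :
    Odd ((m - r) / d) ∧ Odd (r / d) ∧
      ∃ E : List Letter, E.length = d ∧
        Z = npow (comp E ++ E) (((m - r) / d - 1) / 2) ++ comp E ∧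
        W = npow (E ++ comp E) ((r / d - 1) / 2) ++ E := by
  classical
  set S : List Letter := Z ++ W with hS
  set z := Z.length with hzdef
  have hmlen : S.length = m := by simp [hS, hm]
  have hmzr : m = z + r := by simp [hm, hr, hS, hzdef]
  have hz0 : 0 < z := List.length_pos_iff.mpr hZ
  have hr0 : 0 < r := hr ▸ List.length_pos_iff.mpr hW
  have hm0 : 0 < m := by omega
  have hd0 : 0 < d := hd ▸ Nat.gcd_pos_of_pos_left _ hm0
  have hdm : d ∣ m := hd ▸ Nat.gcd_dvd_left m r
  have hdr : d ∣ r := hd ▸ Nat.gcd_dvd_right m r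
  have hdz : d ∣ z := by
    have := Nat.dvd_sub hdm hdr
    rwa [show m - r = z by omega] at this
  set z' := z / d with hz'
  set r' := r / d with hr'
  set m' := m / d with hm'
  have hz'd : d * z' = z := Nat.mul_div_cancel' hdz
  have hr'd : d * r' = r := Nat.mul_div_cancel' hdr
  have hm'd : d * m' = m := Nat.mul_div_cancel' hdm
  have hsum : m' = z' + r' := by
    apply Nat.eq_of_mul_eq_mul_left hd0
    rw [Nat.mul_add, hz'd, hr'd, hm'd]; omega
  have hcop : Nat.Coprime m' r' := by
    rw [hm', hr', hd]
    exact Nat.coprime_div_gcd_div_gcd (hd ▸ hd0)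
  have hcopzr : Nat.Coprime z' r' := by
    have := hcop
    rw [hsum] at this
    exact (Nat.coprime_add_self_left).mp this
  have hnotboth : ¬ (2 ∣ z' ∧ 2 ∣ r') := by
    rintro ⟨h1, h2⟩
    have := Nat.dvd_gcd h1 h2
    rw [Nat.Coprime.gcd_eq_one hcopzr] at this
    omega
  have hm'even : m' % 2 = 0 := Nat.even_iff.mp heven
  have hoddz : z' % 2 = 1 := by
    rcases Nat.even_or_odd z' with h | h
    · rcases Nat.even_or_odd r' with h2 | h2
      · exact absurd ⟨h.two_dvd, h2.two_dvd⟩ hnotboth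
      · have := Nat.even_iff.mp h; have := Nat.odd_iff.mp h2; omega
    · exact Nat.odd_iff.mp h
  have hoddr : r' % 2 = 1 := by omega
  have hcopzm : Nat.Coprime z' m' := by
    rw [hsum, Nat.add_comm]
    exact (Nat.coprime_add_self_right).mpr hcopzr
  have hm'pos : 0 < m' := by
    rcases Nat.eq_zero_or_pos m' with h | h
    · rw [h, Nat.mul_zero] at hm'd; omega
    · exact h
  have hm'2 : 1 < m' := by omega
  obtain ⟨p, -, hp⟩ := Nat.exists_mul_mod_eq_one_of_coprime hcopzm hm'2
  set k := z' * p / m' with hk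
  have hpk : z' * p = m' * k + 1 := by
    have h0 := Nat.div_add_mod (z' * p) m'
    rw [hk]
    omega
  have hoddp : p % 2 = 1 := by
    have h1 : Odd (z' * p) := by
      rw [hpk]
      exact (heven.mul_right k).add_one
    have := (Nat.odd_mul.mp h1).2
    exact Nat.odd_iff.mp this
  have hpz : p * z = m * k + d := by
    calc p * z = p * (d * z') := by rw [hz'd]
    _ = d * (z' * p) := by ring
    _ = d * (m' * k + 1) := by rw [hpk]
    _ = (d * m') * k + d := by ring
    _ = m * k + d := by rw [hm'd]
  -- the pointwise function
  set f : ℕ → Letter := fun i => (S[i]?).getD Letter.M with hf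
  have hfS : ∀ j (h : j < S.length), S[j] = f j := by
    intro j h
    simp [hf, List.getElem?_eq_getElem h]
  -- S = comp (rotate)
  have hrot : S.rotate z = W ++ Z := by
    rw [List.rotate_eq_drop_append_take (by rw [hmlen]; omega)]
    rw [hS, hzdef, List.drop_left, List.take_left]
  have hcompS : comp S = S.rotate z := by
    rw [hrot, heq]
    simp [comp, List.map_map, Function.comp_def, bar_bar]
  have hstep : ∀ i, i < m → f ((i + z) % m) = (f i).bar := by
    intro i hi
    have h1 : i < S.length := by omega
    have e1 : (S.rotate z)[i]? = S[(i + z) % m]? := by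
      rw [List.getElem?_rotate h1, hmlen]
    have e2 : (comp S)[i]? = (S[i]?).map Letter.bar := by
      simp [comp, List.getElem?_map]
    have e3 : S[(i + z) % m]? = (S[i]?).map Letter.bar := by
      rw [← e1, ← e2, hcompS]
    obtain ⟨x, hx⟩ : ∃ x, S[i]? = some x :=
      ⟨_, List.getElem?_eq_getElem h1⟩
    simp [hf, e3, hx]
  have hiter : ∀ q i, i < m → f ((i + q * z) % m) = Letter.bar^[q] (f i) := by
    intro q
    induction q with
    | zero => intro i hi; simp [Nat.mod_eq_of_lt hi]
    | succ n ih =>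
      intro i hi
      have e : (i + (n + 1) * z) % m = ((i + n * z) % m + z) % m := by
        rw [Nat.mod_add_mod]
        congr 1
        ring
      rw [e, hstep _ (Nat.mod_lt _ hm0), ih i hi, Function.iterate_succ_apply']
  have hper : ∀ i, i < m → f ((i + d) % m) = (f i).bar := by
    intro i hi
    have h1 := hiter p i hi
    rw [bar_iter, if_neg (by omega)] at h1
    rw [← h1]
    congr 1
    rw [hpz, show i + (m * k + d) = (i + d) + m * k by ring, Nat.add_mul_mod_self_left]
  have hblockq : ∀ q s, s < d → q * d + s < m → f (q * d + s) = Letter.bar^[q] (f s) := by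
    intro q
    induction q with
    | zero => intro s hs h; simp
    | succ n ih =>
      intro s hs hlt
      have hq1 : (n + 1) * d = n * d + d := by ring
      have h1 : n * d + s < m := by omega
      have h2 := hper (n * d + s) h1
      rw [Nat.mod_eq_of_lt (by omega)] at h2
      rw [show (n + 1) * d + s = n * d + s + d by ring, h2, ih s hs h1]
      exact (Function.iterate_succ_apply' Letter.bar n (f s)).symm
  have hblock : ∀ j, j < m → f j = Letter.bar^[j / d] (f (j % d)) := by
    intro j hj
    have hdm' := Nat.div_add_mod' j d
    have := hblockq (j / d) (j % d) (Nat.mod_lt _ hd0) (by omega)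
    rwa [show j / d * d + j % d = j by omega] at this
  -- the block T and word E
  set T := S.take d with hT
  have hdlem : d ≤ m := Nat.le_of_dvd hm0 hdm
  have hTlen : T.length = d := by
    rw [hT, List.length_take, hmlen]; omega
  have hTget : ∀ t (h : t < d), T[t]'(by omega) = f t := by
    intro t h
    have h' : t < T.length := by omega
    have h2 : t < S.length := by omega
    have e2 : T[t]? = S[t]? := by rw [hT]; exact List.getElem?_take_of_lt h
    rw [List.getElem?_eq_getElem h', List.getElem?_eq_getElem h2] at e2
    rw [Option.some.inj e2, hfS t h2]
  obtain ⟨a, ha⟩ : ∃ a, z' = 2 * a + 1 := ⟨z' / 2, by omega⟩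
  obtain ⟨b, hb⟩ : ∃ b, r' = 2 * b + 1 := ⟨r' / 2, by omega⟩
  set B := T ++ comp T with hB
  have hBlen : B.length = d * 2 := by
    rw [hB, List.length_append, hTlen, comp_length, hTlen]; ring
  have hmval : m = (a + b + 1) * (d * 2) := by
    calc m = d * m' := hm'd.symm
    _ = d * (z' + r') := by rw [hsum]
    _ = d * (2 * a + 1 + (2 * b + 1)) := by rw [ha, hb]
    _ = (a + b + 1) * (d * 2) := by ring
  have hzval : z = a * (d * 2) + d := by
    calc z = d * z' := hz'd.symm
    _ = d * (2 * a + 1) := by rw [ha]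
    _ = a * (d * 2) + d := by ring
  have hBS : S = npow B (a + b + 1) := by
    apply List.ext_getElem
    · rw [hmlen, npow_length, hBlen, hmval]
    · intro j h1 h2
      have hj : j < m := by omega
      rw [hfS j h1, npow_getElem B (by rw [hBlen]; omega) _ j h2, hblock j hj]
      set t := j % B.length with ht
      have htlt : t < B.length := Nat.mod_lt _ (by omega)
      have htmod : t % d = j % d := by
        rw [ht, hBlen]
        exact Nat.mod_mod_of_dvd j ⟨2, rfl⟩
      have htdiv : t / d = j / d % 2 := by
        rw [ht, hBlen]
        exact Nat.mod_mul_right_div_self j d 2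
      have key : B[t]? = some (Letter.bar^[j / d] (f (j % d))) := by
        rcases lt_or_ge t d with hc | hc
        · have h3 : t < T.length := by omega
          rw [show B = T ++ comp T from hB, List.getElem?_append_left h3,
            List.getElem?_eq_getElem h3, hTget t (by omega)]
          have htd0 : t / d = 0 := Nat.div_eq_of_lt hc
          have hjd : j / d % 2 = 0 := by omega
          rw [bar_iter, if_pos hjd]
          have he : t = j % d := by
            have := Nat.mod_eq_of_lt hc
            omega
          rw [he]
        · have h3 : T.length ≤ t := by omega
          have htub : t < d * 2 := by omega
          rw [show B = T ++ comp T from hB, List.getElem?_append_right h3, hTlen]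
          have h4 : t - d < d := by omega
          have h5 : t - d < T.length := by omega
          simp only [comp, List.getElem?_map, List.getElem?_eq_getElem h5, hTget (t - d) h4,
            Option.map_some]
          have htd1 : t / d = 1 := by
            have hlo : 1 ≤ t / d := (Nat.one_le_div_iff hd0).mpr hc
            have hhi : t / d < 2 := (Nat.div_lt_iff_lt_mul hd0).mpr (by omega)
            omega
          have hjd : j / d % 2 = 1 := by omega
          rw [bar_iter, if_neg (by omega)]
          have he : t - d = j % d := by
            have h6 : t % d = t - d := by
              rw [Nat.mod_eq_sub_mod hc]
              exact Nat.mod_eq_of_lt h4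
            omega
          rw [he]
      have hsome := List.getElem?_eq_getElem htlt
      exact Option.some.inj (key.symm.trans hsome)
  have hdecomp : S = (npow B a ++ T) ++ (comp T ++ npow B b) := by
    rw [hBS, show a + b + 1 = a + (b + 1) by ring, npow_add']
    show npow B a ++ (B ++ npow B b) = _
    rw [hB]
    simp [List.append_assoc]
  have hZlen : (npow B a ++ T).length = z := by
    rw [List.length_append, npow_length, hBlen, hTlen, hzval]
  have hZ' : Z = npow B a ++ T := by
    have h1 : Z = S.take z := (List.take_left (l₁ := Z) (l₂ := W)).symm
    rw [h1, hdecomp, List.take_left' hZlen]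
  have hW' : W = comp T ++ npow B b := by
    have h1 : W = S.drop z := (List.drop_left (l₁ := Z) (l₂ := W)).symm
    rw [h1, hdecomp, List.drop_left' hZlen]
  have hmr : m - r = z := by omega
  refine ⟨?_, ?_, comp T, by rw [comp_length, hTlen], ?_, ?_⟩
  · rw [hmr, ← hz', ha]
    exact ⟨a, by ring⟩
  · have : Odd r' := by rw [hb]; exact ⟨b, by ring⟩
    exact this
  · rw [comp_comp, show ((m - r) / d - 1) / 2 = a from by rw [hmr, ← hz']; omega, ← hB]
    exact hZ'
  · have hexpb : (r / d - 1) / 2 = b := by rw [← hr']; omega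
    rw [comp_comp, hexpb, hW', hB]
    exact npow_shuffle (comp T) T b
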